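/- Let γ ∈ ℝ, s ∈ (0,1), and ã(v,η) = ⟨v⟩^γ (1 + |η|² + |v∧η|² + |v|²)^s. Then ã is slowly varying: there exists δ > 0 and C ≥ 1 such that for all X, Y ∈ ℝ⁶ with |X−Y| ≤ δ, C^{-1} ã(Y) ≤ ã(X) ≤ C ã(Y). -/

import Mathlib

/-- Cross product of two vectors in `ℝ³` (as `EuclideanSpace ℝ (Fin 3)`). -/
noncomputable def cross (v w : EuclideanSpace ℝ (Fin 3)) : EuclideanSpace ℝ (Fin 3) :=
  WithLp.toLp 2 fun i => ![v 1 * w 2 - v 2 * w 1, v 2 * w 0 - v 0 * w 2, v 0 * w 1 - v 1 * w 0] i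

/-- The weight `ã(v,η) = ⟨v⟩^γ (1+|η|²+|v∧η|²+|v|²)^s`. -/
noncomputable def atilde (γ s : ℝ) (v η : EuclideanSpace ℝ (Fin 3)) : ℝ :=
  (1 + ‖v‖ ^ 2) ^ (γ / 2) * (1 + ‖η‖ ^ 2 + ‖cross v η‖ ^ 2 + ‖v‖ ^ 2) ^ s

/-!
Both factors of `ã` are powers of quantities that change at most by a fixed factor when `(v, η)`
moves by at most `1`: for `⟨v⟩²` this is the triangle inequality, and for
`1 + |η|² + |v∧η|² + |v|²` it follows from the bilinearity of `∧` and `|v∧η| ≤ |v| |η|`, which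
bound `|v∧η|` by `|v'∧η'| + |η| + |v'|`. A real power `t` turns a two-sided comparison by a factor
`K` into one by `K ^ |t|`.
-/

open Real

lemma rpow_le_rpow_abs_mul_rpow {A B K : ℝ} (t : ℝ) (hA : 0 < A) (hB : 0 < B)
    (hAB : A ≤ K * B) (hBA : B ≤ K * A) : A ^ t ≤ K ^ |t| * B ^ t := by
  have hK : 0 < K := pos_of_mul_pos_left (hA.trans_le hAB) hB.le
  rcases le_or_gt 0 t with ht | ht
  · rw [abs_of_nonneg ht, ← mul_rpow hK.le hB.le]
    exact rpow_le_rpow hA.le hAB ht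
  · have hBA' : K⁻¹ * B ≤ A := by rwa [inv_mul_le_iff₀ hK]
    calc A ^ t ≤ (K⁻¹ * B) ^ t := rpow_le_rpow_of_nonpos (by positivity) hBA' ht.le
      _ = K ^ |t| * B ^ t := by
        rw [mul_rpow (inv_nonneg.2 hK.le) hB.le, inv_rpow hK.le, ← rpow_neg hK.le,
          abs_of_neg ht]

lemma one_add_norm_sq_le_three_mul {E : Type*} [SeminormedAddGroup E] {x y : E}
    (h : ‖x - y‖ ≤ 1) : 1 + ‖x‖ ^ 2 ≤ 3 * (1 + ‖y‖ ^ 2) := by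
  have hx : ‖x‖ ≤ ‖y‖ + 1 := (norm_le_insert' x y).trans (by linarith)
  nlinarith [norm_nonneg x, sq_nonneg (‖y‖ - 1)]

lemma norm_sq_eq_three (x : EuclideanSpace ℝ (Fin 3)) :
    ‖x‖ ^ 2 = x 0 ^ 2 + x 1 ^ 2 + x 2 ^ 2 := by
  simp [EuclideanSpace.norm_sq_eq, Fin.sum_univ_three]

lemma norm_cross_sq (u w : EuclideanSpace ℝ (Fin 3)) :
    ‖cross u w‖ ^ 2 = ‖u‖ ^ 2 * ‖w‖ ^ 2 - inner ℝ u w ^ 2 := by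
  simp only [norm_sq_eq_three, PiLp.inner_apply, Fin.sum_univ_three, cross, Matrix.cons_val,
    RCLike.inner_apply, conj_trivial]
  ring

lemma norm_cross_le (u w : EuclideanSpace ℝ (Fin 3)) : ‖cross u w‖ ≤ ‖u‖ * ‖w‖ := by
  refine le_of_pow_le_pow_left₀ two_ne_zero (by positivity) ?_
  rw [norm_cross_sq, mul_pow]
  exact sub_le_self _ (sq_nonneg _)

lemma cross_sub_cross (v η v' η' : EuclideanSpace ℝ (Fin 3)) :
    cross v η - cross v' η' = cross (v - v') η + cross v' (η - η') := by
  ext i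
  fin_cases i <;> simp [cross] <;> ring

lemma norm_cross_le_of_norm_sub_le_one {v η v' η' : EuclideanSpace ℝ (Fin 3)}
    (hv : ‖v - v'‖ ≤ 1) (hη : ‖η - η'‖ ≤ 1) :
    ‖cross v η‖ ≤ ‖cross v' η'‖ + ‖η‖ + ‖v'‖ := by
  have hvη : ‖cross (v - v') η‖ ≤ ‖η‖ :=
    (norm_cross_le _ _).trans (mul_le_of_le_one_left (norm_nonneg η) hv)
  have hv'η : ‖cross v' (η - η')‖ ≤ ‖v'‖ :=
    (norm_cross_le _ _).trans (mul_le_of_le_one_right (norm_nonneg v') hη)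
  calc ‖cross v η‖ ≤ ‖cross v' η'‖ + ‖cross v η - cross v' η'‖ := norm_le_insert' _ _
    _ ≤ ‖cross v' η'‖ + (‖cross (v - v') η‖ + ‖cross v' (η - η')‖) := by
      rw [cross_sub_cross]; gcongr; exact norm_add_le _ _
    _ ≤ ‖cross v' η'‖ + ‖η‖ + ‖v'‖ := by linarith

/-- The base of the second factor of `atilde`, i.e. `⟨(v, η, v∧η)⟩²`. -/
noncomputable def crossWeight (v η : EuclideanSpace ℝ (Fin 3)) : ℝ :=
  1 + ‖η‖ ^ 2 + ‖cross v η‖ ^ 2 + ‖v‖ ^ 2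

lemma atilde_eq (γ s : ℝ) (v η : EuclideanSpace ℝ (Fin 3)) :
    atilde γ s v η = (1 + ‖v‖ ^ 2) ^ (γ / 2) * crossWeight v η ^ s := rfl

lemma crossWeight_pos (v η : EuclideanSpace ℝ (Fin 3)) : 0 < crossWeight v η := by
  unfold crossWeight; positivity

lemma crossWeight_le_nine_mul {v η v' η' : EuclideanSpace ℝ (Fin 3)}
    (hv : ‖v - v'‖ ≤ 1) (hη : ‖η - η'‖ ≤ 1) :
    crossWeight v η ≤ 9 * crossWeight v' η' := by
  have hc := norm_cross_le_of_norm_sub_le_one hv hη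
  have hηn : ‖η‖ ≤ ‖η'‖ + 1 := (norm_le_insert' η η').trans (by linarith)
  have hvn : ‖v‖ ≤ ‖v'‖ + 1 := (norm_le_insert' v v').trans (by linarith)
  have hc' : ‖cross v η‖ ≤ ‖cross v' η'‖ + ‖η'‖ + ‖v'‖ + 1 := by linarith
  unfold crossWeight
  -- `(a + b + c + 1)² ≤ 4 (a² + b² + c² + 1)` and `(a + 1)² ≤ 2 (a² + 1)`; `1 + 4 + 2 + 2 = 9`
  nlinarith [mul_self_le_mul_self (norm_nonneg _) hc', mul_self_le_mul_self (norm_nonneg _) hηn,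
    mul_self_le_mul_self (norm_nonneg _) hvn, sq_nonneg (‖cross v' η'‖ - ‖η'‖),
    sq_nonneg (‖cross v' η'‖ - ‖v'‖), sq_nonneg (‖η'‖ - ‖v'‖), sq_nonneg (‖cross v' η'‖ - 1),
    sq_nonneg (‖η'‖ - 1), sq_nonneg (‖v'‖ - 1)]

lemma atilde_le_mul_atilde (γ s : ℝ) {v η v' η' : EuclideanSpace ℝ (Fin 3)}
    (hv : ‖v - v'‖ ≤ 1) (hη : ‖η - η'‖ ≤ 1) :
    atilde γ s v η ≤ 3 ^ |γ / 2| * 9 ^ |s| * atilde γ s v' η' := by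
  have hv' : ‖v' - v‖ ≤ 1 := by rwa [norm_sub_rev]
  have hη' : ‖η' - η‖ ≤ 1 := by rwa [norm_sub_rev]
  have hbracket := rpow_le_rpow_abs_mul_rpow (γ / 2) (by positivity) (by positivity)
    (one_add_norm_sq_le_three_mul hv) (one_add_norm_sq_le_three_mul hv')
  have hcross := rpow_le_rpow_abs_mul_rpow s (crossWeight_pos v η) (crossWeight_pos v' η')
    (crossWeight_le_nine_mul hv hη) (crossWeight_le_nine_mul hv' hη')
  rw [atilde_eq, atilde_eq, mul_mul_mul_comm]
  exact mul_le_mul hbracket hcross (rpow_pos_of_pos (crossWeight_pos v η) s).le (by positivity)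

theorem atilde_slowly_varying_general (γ s : ℝ) :
    ∃ δ > (0 : ℝ), ∃ C : ℝ, 1 ≤ C ∧ ∀ v η v' η' : EuclideanSpace ℝ (Fin 3),
      ‖v - v'‖ ^ 2 + ‖η - η'‖ ^ 2 ≤ δ ^ 2 →
      C⁻¹ * atilde γ s v' η' ≤ atilde γ s v η ∧ atilde γ s v η ≤ C * atilde γ s v' η' := by
  have hC : 1 ≤ (3 : ℝ) ^ |γ / 2| * 9 ^ |s| :=
    one_le_mul_of_one_le_of_one_le (one_le_rpow (by norm_num) (abs_nonneg _))
      (one_le_rpow (by norm_num) (abs_nonneg _))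
  refine ⟨1, one_pos, _, hC, fun v η v' η' h => ?_⟩
  rw [one_pow] at h
  have hv : ‖v - v'‖ ≤ 1 := (sq_le_one_iff₀ (norm_nonneg _)).1 (by nlinarith)
  have hη : ‖η - η'‖ ≤ 1 := (sq_le_one_iff₀ (norm_nonneg _)).1 (by nlinarith)
  refine ⟨?_, atilde_le_mul_atilde γ s hv hη⟩
  rw [inv_mul_le_iff₀ (zero_lt_one.trans_le hC)]
  exact atilde_le_mul_atilde γ s (by rwa [norm_sub_rev]) (by rwa [norm_sub_rev])

/-- Slow variation of the weight `ã`: there are `δ > 0` and `C ≥ 1` such that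
`|X−Y| ≤ δ` implies `C⁻¹ ã(Y) ≤ ã(X) ≤ C ã(Y)`. -/
theorem atilde_slowly_varying (γ s : ℝ) (hs : s ∈ Set.Ioo (0 : ℝ) 1) :
    ∃ δ > (0 : ℝ), ∃ C : ℝ, 1 ≤ C ∧ ∀ v η v' η' : EuclideanSpace ℝ (Fin 3),
      ‖v - v'‖ ^ 2 + ‖η - η'‖ ^ 2 ≤ δ ^ 2 →
      C⁻¹ * atilde γ s v' η' ≤ atilde γ s v η ∧ atilde γ s v η ≤ C * atilde γ s v' η' :=
  atilde_slowly_varying_general γ s
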